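/- Let D' ⊆ D'' be subcoalgebras of a coalgebra D satisfying Δ(D'') ⊆ D' ⊗ D'' + D'' ⊗ D'. Let f : D'' → A be a linear map into a unital associative algebra A. If the restriction of f to D' is convolution-invertible in Hom(D', A), then f is convolution-invertible in Hom(D'', A). -/

import Mathlib

/-!
Convolution makes `Hom(D'', A)` a ring, and restriction along `D' → D''` is a surjective ring
morphism onto `Hom(D', A)`. The condition `Δ(D'') ⊆ D' ⊗ D'' + D'' ⊗ D'` guarantees that
the convolution of two maps vanishing on `D'` vanishes, so the kernel of restriction is
square-zero. A surjective ring morphism with nil kernel reflects units: lift an inverse of the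
restriction of `f`; then `f * g` and `g * f` are `1 + (nilpotent)`, hence units.
-/

open TensorProduct

/-- The convolution product on `Hom_k(C, A)`. -/
noncomputable def conv {k : Type*} [Field k] {C A : Type*}
    [AddCommGroup C] [Module k C] [Coalgebra k C]
    [Ring A] [Algebra k A]
    (f g : C →ₗ[k] A) : C →ₗ[k] A :=
  LinearMap.mul' k A ∘ₗ TensorProduct.map f g ∘ₗ Coalgebra.comul

/-- The convolution unit `c ↦ ε(c)·1_A`. -/
noncomputable def convUnit (k : Type*) [Field k] (C A : Type*)
    [AddCommGroup C] [Module k C] [Coalgebra k C]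
    [Ring A] [Algebra k A] : C →ₗ[k] A :=
  Algebra.linearMap k A ∘ₗ (Coalgebra.counit : C →ₗ[k] k)

open WithConv

theorem isUnit_of_isUnit_map_of_ker_isNilpotent {R S : Type*} [Ring R] [Ring S] (φ : R →+* S)
    (hφ : Function.Surjective φ) (hker : ∀ x ∈ RingHom.ker φ, IsNilpotent x) {x : R}
    (hx : IsUnit (φ x)) : IsUnit x := by
  obtain ⟨y, hy⟩ := hφ ↑hx.unit⁻¹
  have hxy : IsUnit (x * y) := by
    have hmem : x * y - 1 ∈ RingHom.ker φ := by simp [RingHom.mem_ker, hy]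
    simpa using (hker _ hmem).isUnit_add_one
  have hyx : IsUnit (y * x) := by
    have hmem : y * x - 1 ∈ RingHom.ker φ := by simp [RingHom.mem_ker, hy]
    simpa using (hker _ hmem).isUnit_add_one
  obtain ⟨a, ha⟩ := hxy.exists_right_inv
  obtain ⟨b, hb⟩ := hyx.exists_left_inv
  exact isUnit_iff_exists_and_exists.2
    ⟨⟨y * a, by rw [← mul_assoc, ha]⟩, ⟨b * y, by rw [mul_assoc, hb]⟩⟩

namespace CoalgHom

section Semiring

variable {R A B C : Type*} [CommSemiring R] [Semiring A] [Algebra R A]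
  [AddCommMonoid B] [Module R B] [Coalgebra R B] [AddCommMonoid C] [Module R C] [Coalgebra R C]

variable (A) in
noncomputable def convPrecomp (ι : B →ₗc[R] C) :
    WithConv (C →ₗ[R] A) →+* WithConv (B →ₗ[R] A) where
  toFun u := toConv (u.ofConv ∘ₗ ι.toLinearMap)
  map_one' := by
    ext b
    simp [LinearMap.convOne_apply, CoalgHomClass.counit_comp_apply]
  map_mul' u v := congrArg toConv (LinearMap.convMul_comp_coalgHom_distrib u v ι)
  map_zero' := rfl
  map_add' _ _ := rfl

@[simp]
theorem ofConv_convPrecomp (ι : B →ₗc[R] C) (u : WithConv (C →ₗ[R] A)) :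
    (ι.convPrecomp A u).ofConv = u.ofConv ∘ₗ ι.toLinearMap :=
  rfl

theorem convMul_eq_zero_of_convPrecomp_eq_zero (ι : B →ₗc[R] C)
    (hcomul : ∀ c : C, Coalgebra.comul (R := R) c ∈
      LinearMap.range (TensorProduct.map ι.toLinearMap (LinearMap.id : C →ₗ[R] C)) ⊔
      LinearMap.range (TensorProduct.map (LinearMap.id : C →ₗ[R] C) ι.toLinearMap))
    {u v : WithConv (C →ₗ[R] A)} (hu : ι.convPrecomp A u = 0) (hv : ι.convPrecomp A v = 0) :
    u * v = 0 := by
  have hu' : u.ofConv ∘ₗ ι.toLinearMap = 0 := congrArg ofConv hu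
  have hv' : v.ofConv ∘ₗ ι.toLinearMap = 0 := congrArg ofConv hv
  ext c
  obtain ⟨_, ⟨x, rfl⟩, _, ⟨y, rfl⟩, hxy⟩ := Submodule.mem_sup.mp (hcomul c)
  rw [LinearMap.convMul_apply, ← hxy, map_add, map_add, ← LinearMap.comp_apply (map _ _),
    ← map_comp, ← LinearMap.comp_apply (map _ _), ← map_comp, hu', hv']
  simp

end Semiring

theorem convPrecomp_surjective {K A B C : Type*} [Field K] [Semiring A] [Algebra K A]
    [AddCommGroup B] [Module K B] [Coalgebra K B] [AddCommGroup C] [Module K C] [Coalgebra K C]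
    {ι : B →ₗc[K] C} (hι : Function.Injective ι) :
    Function.Surjective (ι.convPrecomp A) := by
  obtain ⟨π, hπ⟩ := ι.toLinearMap.exists_leftInverse_of_injective (LinearMap.ker_eq_bot.mpr hι)
  refine fun w ↦ ⟨toConv (w.ofConv ∘ₗ π), ?_⟩
  ext b
  simpa using congrArg w.ofConv (LinearMap.congr_fun hπ b)

end CoalgHom

theorem exists_conv_eq_convUnit_iff_isUnit {k C A : Type*} [Field k] [AddCommGroup C]
    [Module k C] [Coalgebra k C] [Ring A] [Algebra k A] (f : C →ₗ[k] A) :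
    (∃ g : C →ₗ[k] A, conv f g = convUnit k C A ∧ conv g f = convUnit k C A) ↔
      IsUnit (toConv f) := by
  rw [isUnit_iff_exists]
  constructor
  · rintro ⟨g, hfg, hgf⟩
    exact ⟨toConv g, congrArg toConv hfg, congrArg toConv hgf⟩
  · rintro ⟨g, hfg, hgf⟩
    exact ⟨g.ofConv, congrArg ofConv hfg, congrArg ofConv hgf⟩

theorem takeuchi_step {k : Type*} [Field k] {D' D'' A : Type*}
    [AddCommGroup D'] [Module k D'] [Coalgebra k D']
    [AddCommGroup D''] [Module k D''] [Coalgebra k D'']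
    [Ring A] [Algebra k A]
    (ι : D' →ₗc[k] D'') (hι : Function.Injective ι)
    (hext : ∀ c : D'', Coalgebra.comul (R := k) c ∈
      LinearMap.range (TensorProduct.map ι.toLinearMap (LinearMap.id : D'' →ₗ[k] D'')) ⊔
      LinearMap.range (TensorProduct.map (LinearMap.id : D'' →ₗ[k] D'') ι.toLinearMap))
    (f : D'' →ₗ[k] A)
    (hf : ∃ g' : D' →ₗ[k] A,
      conv (f ∘ₗ ι.toLinearMap) g' = convUnit k D' A ∧
      conv g' (f ∘ₗ ι.toLinearMap) = convUnit k D' A) :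
    ∃ g : D'' →ₗ[k] A, conv f g = convUnit k D'' A ∧ conv g f = convUnit k D'' A := by
  have hker_nil : ∀ u ∈ RingHom.ker (ι.convPrecomp A), IsNilpotent u := fun u hu ↦
    ⟨2, by rw [pow_two]; exact ι.convMul_eq_zero_of_convPrecomp_eq_zero hext hu hu⟩
  rw [exists_conv_eq_convUnit_iff_isUnit] at hf ⊢
  exact isUnit_of_isUnit_map_of_ker_isNilpotent _ (ι.convPrecomp_surjective hι) hker_nil hf
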